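/- Suppose the modal signature Λ is separating for F. For each type X let M X be the set of maximally one-step satisfiable subsets Φ of the one-step formulas over Set X (Φ is one-step satisfiable if the intersection of the extensions, under the identity valuation on Set X, of all formulas in Φ is nonempty, and maximally so if it is not properly contained in another one-step satisfiable set), and for f : X → Y let (M f) Φ := {φ a one-step formula over Set Y | the formula obtained from φ by replacing each atom B : Set Y by f ⁻¹' B lies in Φ}. Then the map η_X : F.obj X → M X sending t to its theory {φ | t lies in the extension of φ} is bijective for every type X, and natural: for every f : X → Y and t : F.obj X, (M f)(η_X t) = η_Y (F.map f t). Hence F is isomorphic to its MSS functor. -/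

import Mathlib

open CategoryTheory

universe u v

/-- Propositional formulas over a type `Z` of atoms. -/
inductive PropForm (Z : Type v) : Type v
  | bot : PropForm Z
  | atom : Z → PropForm Z
  | neg : PropForm Z → PropForm Z
  | and : PropForm Z → PropForm Z → PropForm Z

/-- Extension of a propositional formula under a valuation of atoms by subsets of `X`. -/
def PropForm.eval {Z : Type v} {X : Type u} (τ : Z → Set X) : PropForm Z → Set X
  | .bot => ∅
  | .atom z => τ z
  | .neg φ => (PropForm.eval τ φ)ᶜ
  | .and φ ψ => PropForm.eval τ φ ∩ PropForm.eval τ ψ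

/-- Substitution of atoms in a propositional formula. -/
def PropForm.map {Z : Type v} {W : Type _} (f : Z → W) : PropForm Z → PropForm W
  | .bot => .bot
  | .atom z => .atom (f z)
  | .neg φ => .neg (PropForm.map f φ)
  | .and φ ψ => .and (PropForm.map f φ) (PropForm.map f ψ)

/-- A finite modal signature for `F`, interpreted by predicate liftings: a finite type of
modalities with arities, each interpreted by a natural predicate lifting. -/
structure ModalSig (F : Type u ⥤ Type u) where
  Λ : Type
  finite : Finite Λ
  ar : Λ → ℕ
  lift : ∀ (m : Λ) (X : Type u), (Fin (ar m) → Set X) → Set (F.obj X)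
  natural : ∀ (m : Λ) (X Y : Type u) (f : X → Y) (A : Fin (ar m) → Set Y),
    lift m X (fun i => f ⁻¹' A i) = F.map (TypeCat.ofHom f) ⁻¹' lift m Y A

/-- `Prop(Λ(Z))`: propositional combinations of modal atoms `♥(z₁,…,z_{ar ♥})` over `Z`. -/
def OSF {F : Type u ⥤ Type u} (S : ModalSig F) (Z : Type v) : Type v :=
  PropForm ((m : S.Λ) × (Fin (S.ar m) → Z))

/-- Extension of a formula in `Prop(Λ(Z))` in `Set (F.obj X)`, given a valuation
`τ : Z → Set X`. -/
def OSF.ext {F : Type u ⥤ Type u} (S : ModalSig F) {Z : Type v} {X : Type u}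
    (τ : Z → Set X) (φ : OSF S Z) : Set (F.obj X) :=
  PropForm.eval (fun a => S.lift a.1 X (fun i => τ (a.2 i))) φ

/-- Substitution of the arguments of modalities in a formula in `Prop(Λ(Z))`. -/
def OSF.map {F : Type u ⥤ Type u} (S : ModalSig F) {Z W : Type _} (f : Z → W) :
    OSF S Z → OSF S W :=
  PropForm.map (fun a => ⟨a.1, fun i => f (a.2 i)⟩)

/-- A Boolean subalgebra of `Set X`. -/
def IsBoolSubalg {X : Type u} (𝔄 : Set (Set X)) : Prop :=
  ∅ ∈ 𝔄 ∧ Set.univ ∈ 𝔄 ∧ (∀ A ∈ 𝔄, Aᶜ ∈ 𝔄) ∧ (∀ A ∈ 𝔄, ∀ B ∈ 𝔄, A ∪ B ∈ 𝔄) ∧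
    (∀ A ∈ 𝔄, ∀ B ∈ 𝔄, A ∩ B ∈ 𝔄)

/-- `Λ` is separating for `F`. -/
def Separating {F : Type u ⥤ Type u} (S : ModalSig F) : Prop :=
  ∀ X : Type u, Function.Injective
    (fun t : F.obj X => fun m : S.Λ => {A : Fin (S.ar m) → Set X | t ∈ S.lift m X A})

/-- One-step formulas over `Set X`, i.e. `Prop(Λ(Prop(Set X)))`. -/
def OS1 {F : Type u ⥤ Type u} (S : ModalSig F) (X : Type u) : Type u :=
  OSF S (PropForm (Set X))

/-- Extension of a one-step formula over `Set X` under the identity valuation. -/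
def OS1.ext {F : Type u ⥤ Type u} (S : ModalSig F) {X : Type u} (φ : OS1 S X) :
    Set (F.obj X) :=
  OSF.ext S (fun p : PropForm (Set X) => PropForm.eval (id : Set X → Set X) p) φ

/-- The theory of `t : F X`: all one-step formulas over `Set X` holding of `t`. -/
def theoryOf {F : Type u ⥤ Type u} (S : ModalSig F) {X : Type u} (t : F.obj X) :
    Set (OS1 S X) :=
  {φ | t ∈ OS1.ext S φ}

/-- One-step satisfiability of a set of one-step formulas over `Set X`. -/
def OSSat {F : Type u ⥤ Type u} (S : ModalSig F) {X : Type u} (Φ : Set (OS1 S X)) : Prop :=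
  ∃ t : F.obj X, ∀ φ ∈ Φ, t ∈ OS1.ext S φ

/-- Maximal one-step satisfiability. -/
def MSS {F : Type u ⥤ Type u} (S : ModalSig F) {X : Type u} (Φ : Set (OS1 S X)) : Prop :=
  OSSat S Φ ∧ ∀ Ψ : Set (OS1 S X), OSSat S Ψ → Φ ⊆ Ψ → Φ = Ψ

/-- The action of the MSS functor on a map `f : X → Y`: substitute each atom `B : Set Y`
by `f ⁻¹' B` and test membership. -/
def MSSmap {F : Type u ⥤ Type u} (S : ModalSig F) {X Y : Type u} (f : X → Y)
    (Φ : Set (OS1 S X)) : Set (OS1 S Y) :=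
  {φ | OSF.map S (PropForm.map (fun B : Set Y => f ⁻¹' B)) φ ∈ Φ}

theorem PropForm.eval_map {Z W : Type v} {X : Type u} (g : Z → W) (τ : W → Set X)
    (p : PropForm Z) : PropForm.eval τ (PropForm.map g p) = PropForm.eval (fun z => τ (g z)) p := by
  induction p with
  | bot => rfl
  | atom z => rfl
  | neg φ ih => simp [PropForm.map, PropForm.eval, ih]
  | and φ ψ ih1 ih2 => simp [PropForm.map, PropForm.eval, ih1, ih2]

theorem PropForm.eval_preimage {Z : Type v} {X Y : Type u} (f : X → Y) (τ : Z → Set Y)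
    (p : PropForm Z) : PropForm.eval (fun z => f ⁻¹' τ z) p = f ⁻¹' PropForm.eval τ p := by
  induction p with
  | bot => simp [PropForm.eval]
  | atom z => rfl
  | neg φ ih => simp [PropForm.eval, ih]
  | and φ ψ ih1 ih2 => simp [PropForm.eval, ih1, ih2]

theorem OS1.ext_map {F : Type u ⥤ Type u} (S : ModalSig F) {X Y : Type u} (f : X → Y)
    (φ : OS1 S Y) :
    OS1.ext S (OSF.map S (PropForm.map (fun B : Set Y => f ⁻¹' B)) φ)
      = F.map (TypeCat.ofHom f) ⁻¹' OS1.ext S φ := by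
  unfold OS1.ext OSF.ext OSF.map
  change PropForm ((m : S.Λ) × (Fin (S.ar m) → PropForm (Set Y))) at φ
  rw [PropForm.eval_map]
  have h : (fun (a : (m : S.Λ) × (Fin (S.ar m) → PropForm (Set Y))) =>
      S.lift a.1 X fun i =>
        PropForm.eval (id : Set X → Set X) (PropForm.map (fun B : Set Y => f ⁻¹' B) (a.2 i)))
      = fun a => F.map (TypeCat.ofHom f) ⁻¹' (S.lift a.1 Y fun i => PropForm.eval (id : Set Y → Set Y) (a.2 i)) := by
    funext a
    have : (fun i => PropForm.eval (id : Set X → Set X)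
        (PropForm.map (fun B : Set Y => f ⁻¹' B) (a.2 i)))
        = fun i => f ⁻¹' PropForm.eval (id : Set Y → Set Y) (a.2 i) := by
      funext i
      rw [PropForm.eval_map]
      exact PropForm.eval_preimage f (fun B => B) (a.2 i)
    rw [this, S.natural]
  rw [h, PropForm.eval_preimage]

/-- If `Λ` is separating, the theory map `η_X : F X → M X` lands in maximally one-step
satisfiable sets, is bijective onto them, and is natural; hence `F` is isomorphic to its
MSS functor. -/
theorem mss_functor_iso {F : Type u ⥤ Type u} (S : ModalSig F) (hsep : Separating S) :
    (∀ (X : Type u) (t : F.obj X), MSS S (theoryOf S t)) ∧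
    (∀ X : Type u, Function.Injective (fun t : F.obj X => theoryOf S t)) ∧
    (∀ (X : Type u) (Φ : Set (OS1 S X)), MSS S Φ → ∃ t : F.obj X, theoryOf S t = Φ) ∧
    (∀ (X Y : Type u) (f : X → Y) (t : F.obj X),
      MSSmap S f (theoryOf S t) = theoryOf S (F.map (TypeCat.ofHom f) t)) := by
  have hmss : ∀ (X : Type u) (t : F.obj X), MSS S (theoryOf S t) := by
    intro X t
    refine ⟨⟨t, fun φ hφ => hφ⟩, ?_⟩
    rintro Ψ ⟨s, hs⟩ hsub
    apply Set.Subset.antisymm hsub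
    intro φ hφ
    by_contra hφt
    have hneg : PropForm.neg φ ∈ theoryOf S t := hφt
    have h1 : s ∈ OS1.ext S φ := hs φ hφ
    have h2 : s ∈ OS1.ext S (PropForm.neg φ) := hs _ (hsub hneg)
    exact h2 h1
  refine ⟨hmss, ?_, ?_, ?_⟩
  · intro X t t' h
    apply hsep X
    funext m
    ext A
    have hform : ∀ u : F.obj X, u ∈ S.lift m X A ↔
        (PropForm.atom ⟨m, fun i => PropForm.atom (A i)⟩ : OS1 S X) ∈ theoryOf S u := by
      intro u; rfl
    simp only [Set.mem_setOf_eq, hform, h]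
  · intro X Φ ⟨⟨t, ht⟩, hmax⟩
    refine ⟨t, (hmax (theoryOf S t) ⟨t, fun φ hφ => hφ⟩ ht).symm⟩
  · intro X Y f t
    ext φ
    show OSF.map S (PropForm.map (fun B : Set Y => f ⁻¹' B)) φ ∈ theoryOf S t ↔ _
    show t ∈ OS1.ext S (OSF.map S (PropForm.map fun B => f ⁻¹' B) φ) ↔ _
    rw [OS1.ext_map]; rfl
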